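/- arXiv:1804.03127 — 3 statements merged into one kernel-verified Lean document; each statement's English description precedes it below -/
import Mathlib

section
/- The function ψ(t,λ) = [cos²(t/2) − λ⁻⁴ sin²(t/2) + 2i sin(t/2)cos(t/2)] / √(cos²(t/2) + λ⁻⁴ sin²(t/2)), with λ ≥ 1, satisfies the linear equation ψ̈ + (1/4)(1 + 3(φ(t)+1)⁻⁴)ψ = 0 where φ(t) = −1 + √(λ² cos²(t/2) + λ⁻² sin²(t/2)), with ψ(0) = 1 and ψ̇(0) = i. -/
/-!
With `a = λ⁻⁴`, `α = (1 - a)/2`, `β = (1 + a)/2`, the half-angle formulas turn `ψ` into `N/√Q` with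
`N t = α + β cos t + i sin t` and `Q t = β + α cos t`, while `(φ t + 1)⁴ = λ⁴ Q²`.
For arbitrary `N` and `Q > 0` the quotient rule gives
`(N/√Q)'' = (4Q²N'' - 4QQ'N' + (3Q'² - 2QQ'')N) / (4Q²√Q)`,
and for this pair the numerator equals `-(Q² + 3(β² - α²))N` once `sin² + cos² = 1` is used;
finally `β² - α² = a`.
-/

open Real Complex

section DivSqrt

variable {N N₁ : ℝ → ℂ} {Q Q₁ : ℝ → ℝ} {t : ℝ}

noncomputable def divSqrtDeriv (N N₁ : ℝ → ℂ) (Q Q₁ : ℝ → ℝ) (x : ℝ) : ℂ :=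
  (2 * Q x * N₁ x - Q₁ x * N x) / (2 * Q x * √(Q x))

theorem hasDerivAt_div_sqrt (hN : HasDerivAt N (N₁ t) t) (hQ : HasDerivAt Q (Q₁ t) t)
    (hpos : 0 < Q t) :
    HasDerivAt (fun x => N x / (√(Q x) : ℂ)) (divSqrtDeriv N N₁ Q Q₁ t) t := by
  have hr : (√(Q t) : ℂ) ≠ 0 := by exact_mod_cast (Real.sqrt_pos.2 hpos).ne'
  have hQr : (Q t : ℂ) = (√(Q t) : ℂ) ^ 2 := by exact_mod_cast (Real.sq_sqrt hpos.le).symm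
  refine (hN.div (hQ.sqrt hpos.ne').ofReal_comp hr).congr_deriv ?_
  rw [divSqrtDeriv, hQr]
  push_cast
  field_simp

theorem hasDerivAt_divSqrtDeriv {n₂ : ℂ} {q₂ : ℝ} (hN : HasDerivAt N (N₁ t) t)
    (hN₁ : HasDerivAt N₁ n₂ t) (hQ : HasDerivAt Q (Q₁ t) t) (hQ₁ : HasDerivAt Q₁ q₂ t)
    (hpos : 0 < Q t) :
    HasDerivAt (divSqrtDeriv N N₁ Q Q₁)
      ((4 * Q t ^ 2 * n₂ - 4 * Q t * Q₁ t * N₁ t + (3 * Q₁ t ^ 2 - 2 * Q t * q₂) * N t)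
        / (4 * Q t ^ 2 * √(Q t))) t := by
  have hr : (√(Q t) : ℂ) ≠ 0 := by exact_mod_cast (Real.sqrt_pos.2 hpos).ne'
  have hQr : (Q t : ℂ) = (√(Q t) : ℂ) ^ 2 := by exact_mod_cast (Real.sq_sqrt hpos.le).symm
  have hnum := ((hQ.ofReal_comp.const_mul 2).mul hN₁).sub (hQ₁.ofReal_comp.mul hN)
  have hden := (hQ.ofReal_comp.const_mul 2).mul (hQ.sqrt hpos.ne').ofReal_comp
  have hden0 : (2 * Q t * √(Q t) : ℂ) ≠ 0 := by
    rw [hQr]; exact mul_ne_zero (mul_ne_zero two_ne_zero (pow_ne_zero 2 hr)) hr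
  refine (hnum.div hden hden0).congr_deriv ?_
  simp only [Pi.mul_apply, Pi.sub_apply]
  rw [hQr]
  push_cast
  field_simp
  ring

end DivSqrt

section Pinney

variable (α β : ℝ)

noncomputable def pinneyNum (t : ℝ) : ℂ := ((α + β * Real.cos t : ℝ) : ℂ) + Real.sin t * I

noncomputable def pinneyNum' (t : ℝ) : ℂ := ((-(β * Real.sin t) : ℝ) : ℂ) + Real.cos t * I

noncomputable def pinneyDen (t : ℝ) : ℝ := β + α * Real.cos t

noncomputable def pinneyDen' (t : ℝ) : ℝ := -(α * Real.sin t)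

theorem hasDerivAt_pinneyNum (t : ℝ) : HasDerivAt (pinneyNum α β) (pinneyNum' β t) t := by
  have h := (((Real.hasDerivAt_cos t).const_mul β).const_add α).ofReal_comp.add
    ((Real.hasDerivAt_sin t).ofReal_comp.mul_const I)
  exact h.congr_deriv (by simp [pinneyNum'])

theorem hasDerivAt_pinneyNum' (t : ℝ) :
    HasDerivAt (pinneyNum' β) (((-(β * Real.cos t) : ℝ) : ℂ) - Real.sin t * I) t := by
  have h := ((Real.hasDerivAt_sin t).const_mul β).neg.ofReal_comp.add
    ((Real.hasDerivAt_cos t).ofReal_comp.mul_const I)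
  exact h.congr_deriv (by push_cast; ring)

theorem hasDerivAt_pinneyDen (t : ℝ) : HasDerivAt (pinneyDen α β) (pinneyDen' α t) t := by
  have h := ((Real.hasDerivAt_cos t).const_mul α).const_add β
  exact h.congr_deriv (by simp [pinneyDen'])

theorem hasDerivAt_pinneyDen' (t : ℝ) :
    HasDerivAt (pinneyDen' α) (-(α * Real.cos t)) t :=
  ((Real.hasDerivAt_sin t).const_mul α).neg

theorem pinney_identity (t : ℝ) :
    4 * pinneyDen α β t ^ 2 * (((-(β * Real.cos t) : ℝ) : ℂ) - Real.sin t * I)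
      - 4 * pinneyDen α β t * pinneyDen' α t * pinneyNum' β t
      + (3 * pinneyDen' α t ^ 2 - 2 * pinneyDen α β t * ((-(α * Real.cos t) : ℝ) : ℂ))
        * pinneyNum α β t
      = -((pinneyDen α β t ^ 2 + 3 * (β ^ 2 - α ^ 2) : ℝ) : ℂ) * pinneyNum α β t := by
  have h := Real.sin_sq_add_cos_sq t
  simp only [pinneyNum, pinneyNum', pinneyDen, pinneyDen']
  generalize Real.sin t = s at h ⊢
  generalize Real.cos t = c at h ⊢
  have hC : (s : ℂ) ^ 2 + (c : ℂ) ^ 2 = 1 := by exact_mod_cast h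
  push_cast
  linear_combination (3 * α ^ 2 * (α + β * c + s * I) - 4 * α * β * (β + α * c)) * hC

theorem pinneyDen_pos {α β : ℝ} (h : |α| < β) (t : ℝ) : 0 < pinneyDen α β t := by
  have hcos : |α * Real.cos t| ≤ |α| := by
    rw [abs_mul]; exact mul_le_of_le_one_right (abs_nonneg α) (abs_cos_le_one t)
  unfold pinneyDen
  linarith [neg_abs_le (α * Real.cos t)]

theorem hasDerivAt_pinney {t : ℝ} (ht : 0 < pinneyDen α β t) :
    HasDerivAt (fun x => pinneyNum α β x / (√(pinneyDen α β x) : ℂ))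
        (divSqrtDeriv (pinneyNum α β) (pinneyNum' β) (pinneyDen α β) (pinneyDen' α) t) t ∧
      HasDerivAt (divSqrtDeriv (pinneyNum α β) (pinneyNum' β) (pinneyDen α β) (pinneyDen' α))
        (-((1 / 4 * (1 + 3 * (β ^ 2 - α ^ 2) / pinneyDen α β t ^ 2) : ℝ) : ℂ)
          * (pinneyNum α β t / (√(pinneyDen α β t) : ℂ))) t := by
  have hN := hasDerivAt_pinneyNum α β t
  have hQ := hasDerivAt_pinneyDen α β t
  refine ⟨hasDerivAt_div_sqrt hN hQ ht, ?_⟩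
  refine (hasDerivAt_divSqrtDeriv hN (hasDerivAt_pinneyNum' β t) hQ (hasDerivAt_pinneyDen' α t)
    ht).congr_deriv ?_
  have hr : (√(pinneyDen α β t) : ℂ) ≠ 0 := by exact_mod_cast (Real.sqrt_pos.2 ht).ne'
  have hQ0 : (pinneyDen α β t : ℂ) ≠ 0 := by exact_mod_cast ht.ne'
  rw [pinney_identity]
  push_cast
  field_simp

theorem cos_sq_half_eq (t : ℝ) : Real.cos (t / 2) ^ 2 = 1 / 2 + Real.cos t / 2 := by
  rw [Real.cos_sq, mul_div_cancel₀ t two_ne_zero]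

theorem pinneyDen_half_angle (a t : ℝ) :
    Real.cos (t / 2) ^ 2 + a * Real.sin (t / 2) ^ 2 = pinneyDen ((1 - a) / 2) ((1 + a) / 2) t := by
  rw [pinneyDen, Real.sin_sq, cos_sq_half_eq]; ring

theorem pinneyNum_half_angle (a t : ℝ) :
    ((Real.cos (t / 2) ^ 2 - a * Real.sin (t / 2) ^ 2 : ℝ) : ℂ)
      + 2 * Real.sin (t / 2) * Real.cos (t / 2) * I = pinneyNum ((1 - a) / 2) ((1 + a) / 2) t := by
  have hsin := Real.sin_two_mul (t / 2)
  rw [mul_div_cancel₀ t two_ne_zero] at hsin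
  rw [pinneyNum, hsin, Real.sin_sq, cos_sq_half_eq]
  push_cast
  ring

theorem sqrt_half_angle_pow_four {l : ℝ} (hl : l ≠ 0) (t : ℝ) :
    √(l ^ 2 * Real.cos (t / 2) ^ 2 + (l ^ 2)⁻¹ * Real.sin (t / 2) ^ 2) ^ 4
      = l ^ 4 * pinneyDen ((1 - (l ^ 4)⁻¹) / 2) ((1 + (l ^ 4)⁻¹) / 2) t ^ 2 := by
  have harg : l ^ 2 * Real.cos (t / 2) ^ 2 + (l ^ 2)⁻¹ * Real.sin (t / 2) ^ 2
      = l ^ 2 * pinneyDen ((1 - (l ^ 4)⁻¹) / 2) ((1 + (l ^ 4)⁻¹) / 2) t := by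
    rw [← pinneyDen_half_angle]; field_simp
  have hnonneg : 0 ≤ l ^ 2 * Real.cos (t / 2) ^ 2 + (l ^ 2)⁻¹ * Real.sin (t / 2) ^ 2 := by
    positivity
  rw [show (4 : ℕ) = 2 * 2 from rfl, pow_mul, Real.sq_sqrt hnonneg, harg]
  ring

end Pinney

theorem stmt6 (l : ℝ) (hl : 1 ≤ l) :
    let φ : ℝ → ℝ := fun t => -1 + Real.sqrt (l ^ 2 * Real.cos (t / 2) ^ 2 + (l ^ 2)⁻¹ * Real.sin (t / 2) ^ 2)
    let ψ : ℝ → ℂ := fun t =>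
      ((Real.cos (t / 2) ^ 2 - (l ^ 4)⁻¹ * Real.sin (t / 2) ^ 2 : ℝ)
        + 2 * Real.sin (t / 2) * Real.cos (t / 2) * Complex.I)
      / ((Real.sqrt (Real.cos (t / 2) ^ 2 + (l ^ 4)⁻¹ * Real.sin (t / 2) ^ 2) : ℝ) : ℂ)
    ψ 0 = 1 ∧
      ∃ ψ' : ℝ → ℂ, ψ' 0 = Complex.I ∧
        ∀ t, HasDerivAt ψ (ψ' t) t ∧
          HasDerivAt ψ' (-((((1 : ℝ) / 4) * (1 + 3 * (((φ t + 1) ^ 4)⁻¹)) : ℝ) : ℂ) * ψ t) t := by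
  intro φ ψ
  have ha : 0 < (l ^ 4)⁻¹ := by positivity
  set α := (1 - (l ^ 4)⁻¹) / 2 with hα
  set β := (1 + (l ^ 4)⁻¹) / 2 with hβ
  have hψ : ψ = fun t => pinneyNum α β t / (√(pinneyDen α β t) : ℂ) := by
    funext t
    simp only [ψ, hα, hβ, pinneyNum_half_angle, pinneyDen_half_angle]
  have hφ (t : ℝ) : (φ t + 1) ^ 4 = l ^ 4 * pinneyDen α β t ^ 2 := by
    rw [← sqrt_half_angle_pow_four (by positivity)]
    simp only [φ, neg_add_cancel_comm]
  have hpos : ∀ t, 0 < pinneyDen α β t := pinneyDen_pos (abs_lt.2 ⟨by linarith, by linarith⟩)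
  refine ⟨by simp [ψ],
    divSqrtDeriv (pinneyNum α β) (pinneyNum' β) (pinneyDen α β) (pinneyDen' α), ?_, fun t => ?_⟩
  · simp [divSqrtDeriv, pinneyNum', pinneyDen, pinneyDen', show β + α = 1 by ring]
  · obtain ⟨hψ', hψ''⟩ := hasDerivAt_pinney α β (hpos t)
    rw [hψ]
    refine ⟨hψ', hψ''.congr_deriv ?_⟩
    rw [hφ, show β ^ 2 - α ^ 2 = (l ^ 4)⁻¹ by ring]
    congr 4
    field_simp
end

section
/- For the equation ẍ + x = λ/x³ with x > 0 and λ > 0, the function x(t) = √((x₀cos t + y₀ sin t)² + (λ/x₀²) sin² t) is the (globally defined, positive) solution with x(0) = x₀ > 0 and ẋ(0) = y₀. -/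
open Real

/-!
Pinney's superposition: if `y₁, y₂` solve `y'' + q y = 0` with Wronskian `W = y₁ y₂' - y₁' y₂`,
then `x = √(y₁² + k y₂²)` satisfies `x'' + q x = k W² / x³`, the numerator of `x''` reducing by
Lagrange's identity. Here `y₁ = x₀ cos t + y₀ sin t`, `y₂ = sin t`, `W = x₀` and `k = λ / x₀²`;
since `W ≠ 0`, `y₁` and `y₂` never vanish together, so `x > 0` everywhere.
-/

noncomputable def ermakovPinney (k : ℝ) (y₁ y₂ : ℝ → ℝ) (t : ℝ) : ℝ :=
  √(y₁ t ^ 2 + k * y₂ t ^ 2)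

theorem sq_add_mul_sq_pos_of_wronskian_ne_zero {a b a' b' k : ℝ} (hk : 0 < k)
    (hW : a * b' - a' * b ≠ 0) : 0 < a ^ 2 + k * b ^ 2 := by
  by_contra! h
  have ha : a = 0 := by nlinarith [sq_nonneg a, sq_nonneg b]
  have hb : b = 0 := by
    by_contra hb
    nlinarith [mul_pos hk (sq_pos_of_ne_zero hb), sq_nonneg a]
  simp [ha, hb] at hW

section

variable {y₁ y₂ y₁' y₂' : ℝ → ℝ} {k t : ℝ}

theorem hasDerivAt_ermakovPinney {a₁ a₂ : ℝ} (h₁ : HasDerivAt y₁ a₁ t) (h₂ : HasDerivAt y₂ a₂ t)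
    (hu : 0 < y₁ t ^ 2 + k * y₂ t ^ 2) :
    HasDerivAt (ermakovPinney k y₁ y₂)
      ((y₁ t * a₁ + k * (y₂ t * a₂)) / ermakovPinney k y₁ y₂ t) t := by
  refine (((h₁.fun_pow 2).fun_add ((h₂.fun_pow 2).const_mul k)).sqrt hu.ne').congr_deriv ?_
  rw [ermakovPinney]
  field_simp
  ring

theorem hasDerivAt_deriv_ermakovPinney (q : ℝ) (h₁ : HasDerivAt y₁ (y₁' t) t)
    (h₂ : HasDerivAt y₂ (y₂' t) t) (h₁' : HasDerivAt y₁' (-q * y₁ t) t)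
    (h₂' : HasDerivAt y₂' (-q * y₂ t) t) (hu : 0 < y₁ t ^ 2 + k * y₂ t ^ 2) :
    HasDerivAt (fun s => (y₁ s * y₁' s + k * (y₂ s * y₂' s)) / ermakovPinney k y₁ y₂ s)
      (k * (y₁ t * y₂' t - y₁' t * y₂ t) ^ 2 / ermakovPinney k y₁ y₂ t ^ 3
        - q * ermakovPinney k y₁ y₂ t) t := by
  have hx : 0 < ermakovPinney k y₁ y₂ t := sqrt_pos.mpr hu
  have hx2 : ermakovPinney k y₁ y₂ t ^ 2 = y₁ t ^ 2 + k * y₂ t ^ 2 := sq_sqrt hu.le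
  refine (((h₁.fun_mul h₁').fun_add ((h₂.fun_mul h₂').const_mul k)).fun_div
    (hasDerivAt_ermakovPinney h₁ h₂ hu) hx.ne').congr_deriv ?_
  field_simp
  linear_combination (y₁' t ^ 2 + k * y₂' t ^ 2 + q * ermakovPinney k y₁ y₂ t ^ 2) * hx2

end

theorem stmt16 (lam x₀ y₀ : ℝ) (hlam : 0 < lam) (hx₀ : 0 < x₀) :
    let x : ℝ → ℝ := fun t =>
      Real.sqrt ((x₀ * Real.cos t + y₀ * Real.sin t) ^ 2 + (lam / x₀ ^ 2) * Real.sin t ^ 2)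
    x 0 = x₀ ∧
      ∃ x' : ℝ → ℝ, x' 0 = y₀ ∧
        ∀ t, 0 < x t ∧ HasDerivAt x (x' t) t ∧
          HasDerivAt x' (lam / (x t) ^ 3 - x t) t := by
  intro x
  let y₁ : ℝ → ℝ := fun s => x₀ * cos s + y₀ * sin s
  let y₁' : ℝ → ℝ := fun s => y₀ * cos s - x₀ * sin s
  let k := lam / x₀ ^ 2
  have hx : x = ermakovPinney k y₁ sin := rfl
  have hW (t : ℝ) : y₁ t * cos t - y₁' t * sin t = x₀ := by
    linear_combination x₀ * cos_sq_add_sin_sq t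
  have hu (t : ℝ) : 0 < y₁ t ^ 2 + k * sin t ^ 2 :=
    sq_add_mul_sq_pos_of_wronskian_ne_zero (by positivity) ((hW t).trans_ne hx₀.ne')
  have hy₁ (t : ℝ) : HasDerivAt y₁ (y₁' t) t :=
    (((hasDerivAt_cos t).const_mul x₀).fun_add ((hasDerivAt_sin t).const_mul y₀)).congr_deriv
      (by ring)
  have hy₁' (t : ℝ) : HasDerivAt y₁' (-1 * y₁ t) t :=
    (((hasDerivAt_cos t).const_mul y₀).fun_sub ((hasDerivAt_sin t).const_mul x₀)).congr_deriv
      (by ring)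
  have hcos (t : ℝ) : HasDerivAt cos (-1 * sin t) t := (hasDerivAt_cos t).congr_deriv (by ring)
  have hx0 : x 0 = x₀ := by simp [x, hx₀.le]
  refine ⟨hx0, fun s => (y₁ s * y₁' s + k * (sin s * cos s)) / x s, ?_, fun t =>
    ⟨sqrt_pos.mpr (hu t), hasDerivAt_ermakovPinney (hy₁ t) (hasDerivAt_sin t) (hu t), ?_⟩⟩
  · simp [hx0, y₁, y₁', hx₀.ne']
  · rw [hx]
    refine (hasDerivAt_deriv_ermakovPinney 1 (hy₁ t) (hasDerivAt_sin t) (hy₁' t) (hcos t)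
      (hu t)).congr_deriv ?_
    rw [hW t, one_mul, div_mul_cancel₀ lam (by positivity)]
end

section
/- Define Φ_λ: D → D, D = (0,∞)×ℝ, by Φ_λ(x₀,y₀) = (x₀ φ_λ(x₀,y₀), −y₀/φ_λ(x₀,y₀)) with φ_λ(x₀,y₀) = √(y₀²/x₀² + λ/x₀⁴). Then the map P = Φ_c ∘ Φ₁ is given by P(x₀,y₀) = (x₀ Π(x₀,y₀), y₀/Π(x₀,y₀)) with Π(x₀,y₀) = √((x₀²y₀² + c)/(x₀²y₀² + 1)), and I(x₀,y₀) = x₀y₀ is a first integral: I(P(x₀,y₀)) = I(x₀,y₀). -/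
/-- Time-(π/2) map of the Ermakov–Pinney equation ẍ + x = λ/x³. -/
noncomputable def Phi (l : ℝ) (z : ℝ × ℝ) : ℝ × ℝ :=
  (z.1 * Real.sqrt (z.2 ^ 2 / z.1 ^ 2 + l / z.1 ^ 4),
    -z.2 / Real.sqrt (z.2 ^ 2 / z.1 ^ 2 + l / z.1 ^ 4))

/-- Π(x₀,y₀) = √((x₀²y₀²+c)/(x₀²y₀²+1)). -/
noncomputable def Pi' (c : ℝ) (z : ℝ × ℝ) : ℝ :=
  Real.sqrt ((z.1 ^ 2 * z.2 ^ 2 + c) / (z.1 ^ 2 * z.2 ^ 2 + 1))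

/-! In closed form `Φ_λ(x, y) = (√(x²y² + λ)/x, -y x²/√(x²y² + λ))`, so `Φ_λ` negates `x y` and
`x²y² + μ` is the same before and after `Φ_λ`. Composing the closed forms, with `a = √(x²y² + λ)` and
`b = √(x²y² + μ)`, gives `Φ_μ (Φ_λ (x, y)) = (x b/a, y a/b)`, and `Π = b/a` for `λ = 1`, `μ = c`. -/

section

variable {l x y : ℝ}

theorem sqrt_sq_div_sq_add_div_pow_four (hx : x ≠ 0) :
    Real.sqrt (y ^ 2 / x ^ 2 + l / x ^ 4) = Real.sqrt (x ^ 2 * y ^ 2 + l) / x ^ 2 := by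
  have h : y ^ 2 / x ^ 2 + l / x ^ 4 = (x ^ 2 * y ^ 2 + l) / (x ^ 2) ^ 2 := by
    field_simp
  rw [h, Real.sqrt_div' _ (by positivity), Real.sqrt_sq (by positivity)]

theorem Phi_mk (hx : x ≠ 0) :
    Phi l (x, y) = (Real.sqrt (x ^ 2 * y ^ 2 + l) / x,
      -(y * x ^ 2) / Real.sqrt (x ^ 2 * y ^ 2 + l)) := by
  simp only [Phi, sqrt_sq_div_sq_add_div_pow_four hx, Prod.mk.injEq]
  constructor
  · field_simp
  · rw [div_div_eq_mul_div, neg_mul]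

theorem Phi_comp_Phi_mk {m : ℝ} (hl : 0 < l) (hx : x ≠ 0) :
    Phi m (Phi l (x, y)) =
      (x * (Real.sqrt (x ^ 2 * y ^ 2 + m) / Real.sqrt (x ^ 2 * y ^ 2 + l)),
        y / (Real.sqrt (x ^ 2 * y ^ 2 + m) / Real.sqrt (x ^ 2 * y ^ 2 + l))) := by
  have ha : Real.sqrt (x ^ 2 * y ^ 2 + l) ≠ 0 := (Real.sqrt_pos.2 (by positivity)).ne'
  rw [Phi_mk hx, Phi_mk (div_ne_zero ha hx)]
  generalize Real.sqrt (x ^ 2 * y ^ 2 + l) = a at ha ⊢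
  have hprod_sq : (a / x) ^ 2 * (-(y * x ^ 2) / a) ^ 2 = x ^ 2 * y ^ 2 := by
    field_simp
  rw [hprod_sq]
  generalize Real.sqrt (x ^ 2 * y ^ 2 + m) = b
  rw [Prod.mk.injEq]
  constructor <;> field_simp

end

theorem stmt17 (c : ℝ) (hc : 0 < c) (x₀ y₀ : ℝ) (hx₀ : 0 < x₀) :
    Phi c (Phi 1 (x₀, y₀)) = (x₀ * Pi' c (x₀, y₀), y₀ / Pi' c (x₀, y₀)) ∧
    (x₀ * Pi' c (x₀, y₀)) * (y₀ / Pi' c (x₀, y₀)) = x₀ * y₀ := by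
  have hPi : Pi' c (x₀, y₀) =
      Real.sqrt (x₀ ^ 2 * y₀ ^ 2 + c) / Real.sqrt (x₀ ^ 2 * y₀ ^ 2 + 1) :=
    Real.sqrt_div' _ (by positivity)
  have hPi_ne : Pi' c (x₀, y₀) ≠ 0 := (Real.sqrt_pos.2 (by positivity)).ne'
  refine ⟨by rw [Phi_comp_Phi_mk one_pos hx₀.ne', hPi], ?_⟩
  field_simp
end
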